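/- Let f ∈ C²(R^d) with ‖∇f‖_∞ + ‖∇²f‖_∞ < ∞. Then for all x, y ∈ R^d, |L^α f(x) - L^α f(y)| ≤ (2 d_α ‖∇²f‖_∞ / (α(2-α)(α-1))) · |x-y|^{2-α}. -/

import Mathlib

noncomputable section

open MeasureTheory Real Set Metric Filter
open scoped ENNReal NNReal BigOperators Topology

/-- `Ed d` is the Euclidean space `ℝ^d`. -/
abbrev Ed (d : ℕ) := EuclideanSpace ℝ (Fin d)

/-- The normalizing constant `d_α = α / (Γ(1-α) cos(πα/2))`. -/
def dCoef (α : ℝ) : ℝ := α / (Real.Gamma (1 - α) * Real.cos (π * α / 2))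

/-- The nonlocal operator
`L^α f(x) = d_α ∫_0^∞ ∫_{S^{d-1}} (f(x+rθ) - f(x) - r⟨θ,∇f(x)⟩) ν(dθ) r^{-1-α} dr`. -/
def Lop (d : ℕ) (α dα : ℝ) (ν : Measure (Ed d)) (f : Ed d → ℝ) (x : Ed d) : ℝ :=
  dα * ∫ r in Ioi (0:ℝ),
    (∫ θ, (f (x + r • θ) - f x - r * (inner ℝ θ (gradient f x) : ℝ)) ∂ν) * r ^ (-1 - α)

/-- The Ornstein–Uhlenbeck type generator `A^α f(x) = L^α f(x) - (1/α)⟨x, ∇f(x)⟩`. -/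
def Aop (d : ℕ) (α dα : ℝ) (ν : Measure (Ed d)) (f : Ed d → ℝ) (x : Ed d) : ℝ :=
  Lop d α dα ν f x - (1 / α) * (inner ℝ x (gradient f x) : ℝ)

/-- Fourier transform (characteristic function) of a measure on `ℝ^d`. -/
def charFunM {d : ℕ} (μ : Measure (Ed d)) (z : Ed d) : ℂ :=
  ∫ x, Complex.exp (((inner ℝ x z : ℝ) : ℂ) * Complex.I) ∂μ

/-- The characteristic exponent
`ψ(z) = ∫_{S^{d-1}} |⟨z,θ⟩|^α (1 - i tan(πα/2) sgn⟨z,θ⟩) ν(dθ)`. -/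
def psiExp (d : ℕ) (α : ℝ) (ν : Measure (Ed d)) (z : Ed d) : ℂ :=
  ∫ θ, ((|(inner ℝ z θ : ℝ)| ^ α : ℝ) : ℂ) *
      (1 - Complex.I * ((Real.tan (π * α / 2) : ℝ) : ℂ) * ((Real.sign (inner ℝ z θ : ℝ) : ℝ) : ℂ)) ∂ν

/-!
Write `L^α f(z) = d_α ∫₀^∞ m_z(r) r^(-1-α) dr`, where `m_z(r)` is the `ν`-average of the Taylor
remainder `R_z(θ, r) = f(z + rθ) - f(z) - r⟨θ, ∇f(z)⟩`. With `h = |x - y|` and `∇f` being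
`M₂`-Lipschitz, `|R_x - R_y| ≤ M₂ r²` for all `r` (each remainder is at most `M₂ r²/2`), and
`|R_x - R_y| ≤ M₂ (2hr - h²)` for `r ≥ h`, because `∂_r (R_x - R_y)` is a difference of gradient
increments of size at most `2 M₂ h`. Integrating these bounds against `r^(-1-α)` over `(0, h]` and
`(h, ∞)` gives `M₂ h^(2-α) (1/(2-α) + 2/(α-1) - 1/α) = 2 M₂ h^(2-α) / (α(2-α)(α-1))`.
-/

open scoped Gradient

section Ray

variable {E : Type*} [NormedAddCommGroup E] [InnerProductSpace ℝ E]

lemma abs_inner_le_of_norm_eq_one {θ : E} (hθ : ‖θ‖ = 1) (v : E) : |inner ℝ θ v| ≤ ‖v‖ :=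
  (abs_real_inner_le_norm θ v).trans_eq (by rw [hθ, one_mul])

variable [CompleteSpace E] {f : E → ℝ}

lemma norm_gradient_sub_le_of_norm_fderiv_gradient_le (hf : ContDiff ℝ 2 f) {M : ℝ}
    (hM : ∀ x, ‖fderiv ℝ (∇ f) x‖ ≤ M) (a b : E) : ‖∇ f a - ∇ f b‖ ≤ M * ‖a - b‖ := by
  have hgrad : ∇ f = (InnerProductSpace.toDual ℝ E).symm ∘ fderiv ℝ f := rfl
  have hdiff : Differentiable ℝ (∇ f) := by
    rw [hgrad]
    exact (InnerProductSpace.toDual ℝ E).symm.toContinuousLinearEquiv.differentiable.comp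
      ((hf.fderiv_right (by norm_num)).differentiable one_ne_zero)
  exact convex_univ.norm_image_sub_le_of_norm_fderiv_le (fun x _ => hdiff x) (fun x _ => hM x)
    (mem_univ b) (mem_univ a)

def rayRemainder (f : E → ℝ) (z θ : E) (r : ℝ) : ℝ :=
  f (z + r • θ) - f z - r * inner ℝ θ (∇ f z)

@[simp]
lemma rayRemainder_zero (z θ : E) : rayRemainder f z θ 0 = 0 := by
  simp [rayRemainder]

lemma hasDerivAt_rayRemainder (hf : Differentiable ℝ f) (z θ : E) (t : ℝ) :
    HasDerivAt (rayRemainder f z θ) (inner ℝ θ (∇ f (z + t • θ) - ∇ f z)) t := by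
  have hline : HasDerivAt (fun s : ℝ => z + s • θ) θ t := by
    simpa using ((hasDerivAt_id t).smul_const θ).const_add z
  have hcomp := (hf (z + t • θ)).hasGradientAt.hasFDerivAt.comp_hasDerivAt t hline
  rw [inner_sub_right]
  refine (hcomp.sub_const (f z)).sub (hasDerivAt_mul_const _) |>.congr_deriv ?_
  simp

lemma continuous_rayRemainder_uncurry (hf : Continuous f) (z : E) :
    Continuous fun p : ℝ × E => rayRemainder f z p.2 p.1 := by
  unfold rayRemainder; fun_prop

lemma continuous_rayRemainder (hf : Differentiable ℝ f) (z θ : E) :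
    Continuous (rayRemainder f z θ) :=
  continuous_iff_continuousAt.2 fun t => (hasDerivAt_rayRemainder hf z θ t).continuousAt

lemma abs_rayRemainder_le_linear (hf : Differentiable ℝ f) {M₁ : ℝ} (hM₁ : ∀ x, ‖∇ f x‖ ≤ M₁)
    (z : E) {θ : E} (hθ : ‖θ‖ = 1) (r : ℝ) : |rayRemainder f z θ r| ≤ 2 * M₁ * |r| := by
  have hderiv : ∀ t, |inner ℝ θ (∇ f (z + t • θ) - ∇ f z)| ≤ 2 * M₁ := fun (t : ℝ) =>
    calc _ ≤ ‖∇ f (z + t • θ) - ∇ f z‖ := abs_inner_le_of_norm_eq_one hθ _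
      _ ≤ ‖∇ f (z + t • θ)‖ + ‖∇ f z‖ := norm_sub_le _ _
      _ ≤ 2 * M₁ := by linarith [hM₁ (z + t • θ), hM₁ z]
  simpa using convex_univ.norm_image_sub_le_of_norm_hasDerivWithin_le
    (fun t _ => (hasDerivAt_rayRemainder hf z θ t).hasDerivWithinAt) (fun t _ => hderiv t)
    (mem_univ 0) (mem_univ r)

variable {M₂ : ℝ} (hlip : ∀ a b, ‖∇ f a - ∇ f b‖ ≤ M₂ * ‖a - b‖)
include hlip

lemma abs_rayRemainder_le_sq (hf : Differentiable ℝ f) (z : E) {θ : E} (hθ : ‖θ‖ = 1) {r : ℝ}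
    (hr : 0 ≤ r) : |rayRemainder f z θ r| ≤ M₂ * r ^ 2 / 2 := by
  have hderiv : ∀ t ∈ Ico 0 r, ‖inner ℝ θ (∇ f (z + t • θ) - ∇ f z)‖ ≤ M₂ * t := by
    rintro t ⟨ht, -⟩
    calc _ ≤ ‖∇ f (z + t • θ) - ∇ f z‖ := abs_inner_le_of_norm_eq_one hθ _
      _ ≤ M₂ * ‖z + t • θ - z‖ := hlip _ _
      _ = M₂ * t := by simp [norm_smul, hθ, abs_of_nonneg ht]
  have hB : ∀ t : ℝ, HasDerivAt (fun s => M₂ * s ^ 2 / 2) (M₂ * t) t := fun t =>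
    (((hasDerivAt_pow 2 t).const_mul M₂).div_const 2).congr_deriv (by ring)
  simpa using image_norm_le_of_norm_deriv_right_le_deriv_boundary
    (continuous_rayRemainder hf z θ).continuousOn
    (fun t _ => (hasDerivAt_rayRemainder hf z θ t).hasDerivWithinAt) (by simp) hB hderiv
    (right_mem_Icc.2 hr)

lemma abs_rayRemainder_sub_le_sq (hf : Differentiable ℝ f) (x y : E) {θ : E} (hθ : ‖θ‖ = 1)
    {r : ℝ} (hr : 0 ≤ r) :
    |rayRemainder f x θ r - rayRemainder f y θ r| ≤ M₂ * r ^ 2 :=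
  calc _ ≤ |rayRemainder f x θ r| + |rayRemainder f y θ r| := abs_sub _ _
    _ ≤ M₂ * r ^ 2 / 2 + M₂ * r ^ 2 / 2 := add_le_add
        (abs_rayRemainder_le_sq hlip hf x hθ hr) (abs_rayRemainder_le_sq hlip hf y hθ hr)
    _ = M₂ * r ^ 2 := by ring

lemma abs_rayRemainder_sub_le_of_norm_sub_le (hf : Differentiable ℝ f) (x y : E) {θ : E}
    (hθ : ‖θ‖ = 1) {r : ℝ} (hr : ‖x - y‖ ≤ r) :
    |rayRemainder f x θ r - rayRemainder f y θ r| ≤ M₂ * (2 * ‖x - y‖ * r - ‖x - y‖ ^ 2) := by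
  set h := ‖x - y‖
  have hderiv : ∀ t : ℝ, HasDerivAt (fun s => rayRemainder f x θ s - rayRemainder f y θ s)
      (inner ℝ θ ((∇ f (x + t • θ) - ∇ f (y + t • θ)) - (∇ f x - ∇ f y))) t := fun t =>
    ((hasDerivAt_rayRemainder hf x θ t).sub (hasDerivAt_rayRemainder hf y θ t)).congr_deriv
      (by simp only [inner_sub_right]; ring)
  have hbound : ∀ t ∈ Ico h r,
      ‖inner ℝ θ ((∇ f (x + t • θ) - ∇ f (y + t • θ)) - (∇ f x - ∇ f y))‖ ≤ 2 * M₂ * h :=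
    fun t _ =>
    calc _ ≤ ‖(∇ f (x + t • θ) - ∇ f (y + t • θ)) - (∇ f x - ∇ f y)‖ :=
          abs_inner_le_of_norm_eq_one hθ _
      _ ≤ ‖∇ f (x + t • θ) - ∇ f (y + t • θ)‖ + ‖∇ f x - ∇ f y‖ := norm_sub_le _ _
      _ ≤ M₂ * ‖x + t • θ - (y + t • θ)‖ + M₂ * h := add_le_add (hlip _ _) (hlip _ _)
      _ = 2 * M₂ * h := by rw [add_sub_add_right_eq_sub]; ring
  have hB : ∀ t : ℝ, HasDerivAt (fun s => M₂ * (2 * h * s - h ^ 2)) (2 * M₂ * h) t := fun t => by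
    simpa [mul_comm, mul_left_comm, mul_assoc] using
      (((hasDerivAt_id t).const_mul (2 * h)).sub_const (h ^ 2)).const_mul M₂
  have hstart : ‖rayRemainder f x θ h - rayRemainder f y θ h‖ ≤ M₂ * (2 * h * h - h ^ 2) :=
    calc _ ≤ M₂ * h ^ 2 := abs_rayRemainder_sub_le_sq hlip hf x y hθ (norm_nonneg _)
      _ = _ := by ring
  exact image_norm_le_of_norm_deriv_right_le_deriv_boundary
    ((continuous_rayRemainder hf x θ).sub (continuous_rayRemainder hf y θ)).continuousOn
    (fun t _ => (hderiv t).hasDerivWithinAt) hstart hB hbound (right_mem_Icc.2 hr)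

end Ray

section PowerWeight

lemma integrableOn_Ioc_zero_rpow {p c : ℝ} (hp : -1 < p) (hc : 0 ≤ c) :
    IntegrableOn (fun r : ℝ => r ^ p) (Ioc 0 c) :=
  (intervalIntegrable_iff_integrableOn_Ioc_of_le hc).1
    (intervalIntegral.intervalIntegrable_rpow' hp)

lemma integral_Ioc_zero_rpow {p c : ℝ} (hp : -1 < p) (hc : 0 ≤ c) :
    ∫ r in Ioc 0 c, r ^ p = c ^ (p + 1) / (p + 1) := by
  rw [← intervalIntegral.integral_of_le hc, integral_rpow (Or.inl hp),
    zero_rpow (by linarith), sub_zero]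

lemma sq_mul_rpow {r : ℝ} (hr : 0 < r) (p : ℝ) : r ^ 2 * r ^ p = r ^ (p + 2) := by
  simpa [mul_comm] using (rpow_add_natCast hr.ne' p 2).symm

lemma self_mul_rpow {r : ℝ} (hr : 0 < r) (p : ℝ) : r * r ^ p = r ^ (p + 1) := by
  rw [rpow_add_one hr.ne', mul_comm]

lemma abs_mul_rpow {r : ℝ} (hr : 0 < r) (a p : ℝ) : |a * r ^ p| = |a| * r ^ p := by
  rw [abs_mul, abs_of_pos (rpow_pos_of_pos hr p)]

variable {α : ℝ} (hα : 1 < α ∧ α < 2)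
include hα

lemma integrableOn_Ioi_mul_rpow_of_abs_le {F : ℝ → ℝ} {A B : ℝ}
    (hF : AEStronglyMeasurable F (volume.restrict (Ioi 0)))
    (hquad : ∀ r, 0 < r → |F r| ≤ A * r ^ 2) (hlin : ∀ r, 0 < r → |F r| ≤ B * r) :
    IntegrableOn (fun r => F r * r ^ (-1 - α)) (Ioi 0) := by
  have hmeas : ∀ s ⊆ Ioi (0 : ℝ), MeasurableSet s →
      AEStronglyMeasurable (fun r => F r * r ^ (-1 - α)) (volume.restrict s) := fun s hs hsm =>
    (hF.mono_set hs).mul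
      ((continuousOn_id.rpow_const fun r hr => Or.inl (hs hr).ne').aestronglyMeasurable hsm)
  rw [← Ioc_union_Ioi_eq_Ioi zero_le_one]
  refine IntegrableOn.union ?_ ?_
  · refine ((integrableOn_Ioc_zero_rpow (p := 1 - α) (by linarith) zero_le_one).const_mul A).mono'
      (hmeas _ Ioc_subset_Ioi_self measurableSet_Ioc) ?_
    refine (ae_restrict_iff' measurableSet_Ioc).2 (ae_of_all _ fun r ⟨hr, _⟩ => ?_)
    calc _ = |F r| * r ^ (-1 - α) := abs_mul_rpow hr _ _
      _ ≤ A * r ^ 2 * r ^ (-1 - α) := by gcongr; exact hquad r hr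
      _ = A * r ^ (1 - α) := by rw [mul_assoc, sq_mul_rpow hr]; ring_nf
  · refine ((integrableOn_Ioi_rpow_of_lt (a := -α) (by linarith) zero_lt_one).const_mul B).mono'
      (hmeas _ (Ioi_subset_Ioi zero_le_one) measurableSet_Ioi) ?_
    refine (ae_restrict_iff' measurableSet_Ioi).2 (ae_of_all _ fun r (hr : 1 < r) => ?_)
    have hr0 : 0 < r := zero_lt_one.trans hr
    calc _ = |F r| * r ^ (-1 - α) := abs_mul_rpow hr0 _ _
      _ ≤ B * r * r ^ (-1 - α) := by gcongr; exact hlin r hr0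
      _ = B * r ^ (-α) := by rw [mul_assoc, self_mul_rpow hr0]; ring_nf

variable {D : ℝ → ℝ} {M h : ℝ} (hh : 0 < h)
  (hD : IntegrableOn (fun r => |D r * r ^ (-1 - α)|) (Ioi 0))
include hh hD

lemma integral_Ioc_abs_mul_rpow_le (hnear : ∀ r, 0 < r → |D r| ≤ M * r ^ 2) :
    ∫ r in Ioc 0 h, |D r * r ^ (-1 - α)| ≤ M * (h ^ (2 - α) / (2 - α)) := by
  refine (setIntegral_mono_on (hD.mono_set Ioc_subset_Ioi_self)
    ((integrableOn_Ioc_zero_rpow (p := 1 - α) (by linarith) hh.le).const_mul M) measurableSet_Ioc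
    fun r ⟨hr, _⟩ => ?_).trans_eq ?_
  · calc _ = |D r| * r ^ (-1 - α) := abs_mul_rpow hr _ _
      _ ≤ M * r ^ 2 * r ^ (-1 - α) := by gcongr; exact hnear r hr
      _ = M * r ^ (1 - α) := by rw [mul_assoc, sq_mul_rpow hr]; ring_nf
  · rw [integral_const_mul, integral_Ioc_zero_rpow (by linarith) hh.le]
    ring_nf

lemma integral_Ioi_abs_mul_rpow_le (hfar : ∀ r, h ≤ r → |D r| ≤ M * (2 * h * r - h ^ 2)) :
    ∫ r in Ioi h, |D r * r ^ (-1 - α)| ≤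
      2 * M * h * (h ^ (1 - α) / (α - 1)) - M * h ^ 2 * (h ^ (-α) / α) := by
  have hi₁ : IntegrableOn (fun r : ℝ => r ^ (-α)) (Ioi h) :=
    integrableOn_Ioi_rpow_of_lt (by linarith) hh
  have hi₂ : IntegrableOn (fun r : ℝ => r ^ (-1 - α)) (Ioi h) :=
    integrableOn_Ioi_rpow_of_lt (by linarith) hh
  refine (setIntegral_mono_on (hD.mono_set (Ioi_subset_Ioi hh.le))
    ((hi₁.const_mul (2 * M * h)).sub (hi₂.const_mul (M * h ^ 2))) measurableSet_Ioi
    fun r (hr : h < r) => ?_).trans_eq ?_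
  · have hr0 : 0 < r := hh.trans hr
    calc _ = |D r| * r ^ (-1 - α) := abs_mul_rpow hr0 _ _
      _ ≤ M * (2 * h * r - h ^ 2) * r ^ (-1 - α) := by gcongr; exact hfar r hr.le
      _ = 2 * M * h * (r * r ^ (-1 - α)) - M * h ^ 2 * r ^ (-1 - α) := by ring
      _ = _ := by simp only [Pi.sub_apply]; rw [self_mul_rpow hr0]; ring_nf
  · simp only [Pi.sub_apply]
    rw [integral_sub (hi₁.const_mul _) (hi₂.const_mul _), integral_const_mul, integral_const_mul,
      integral_Ioi_rpow_of_lt (by linarith) hh, integral_Ioi_rpow_of_lt (by linarith) hh,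
      show -α + 1 = 1 - α by ring, show -1 - α + 1 = -α by ring, neg_div_neg_eq, neg_div,
      ← div_neg, neg_sub]

lemma abs_integral_mul_rpow_le (hnear : ∀ r, 0 < r → |D r| ≤ M * r ^ 2)
    (hfar : ∀ r, h ≤ r → |D r| ≤ M * (2 * h * r - h ^ 2)) :
    |∫ r in Ioi 0, D r * r ^ (-1 - α)| ≤ 2 * M / (α * (2 - α) * (α - 1)) * h ^ (2 - α) := by
  have hpow₁ : h ^ (1 - α) = h * h ^ (-α) := by rw [self_mul_rpow hh]; ring_nf
  have hpow₂ : h ^ (2 - α) = h ^ 2 * h ^ (-α) := by rw [sq_mul_rpow hh]; ring_nf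
  have : α ≠ 0 := by linarith
  have : α - 1 ≠ 0 := by linarith
  have : 2 - α ≠ 0 := by linarith
  calc |∫ r in Ioi 0, D r * r ^ (-1 - α)| ≤ ∫ r in Ioi 0, |D r * r ^ (-1 - α)| :=
        abs_integral_le_integral_abs
    _ = (∫ r in Ioc 0 h, |D r * r ^ (-1 - α)|) + ∫ r in Ioi h, |D r * r ^ (-1 - α)| := by
        rw [← Ioc_union_Ioi_eq_Ioi hh.le, setIntegral_union (Ioc_disjoint_Ioi le_rfl)
          measurableSet_Ioi (hD.mono_set Ioc_subset_Ioi_self)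
          (hD.mono_set (Ioi_subset_Ioi hh.le))]
    _ ≤ M * (h ^ (2 - α) / (2 - α)) +
        (2 * M * h * (h ^ (1 - α) / (α - 1)) - M * h ^ 2 * (h ^ (-α) / α)) :=
        add_le_add (integral_Ioc_abs_mul_rpow_le hα hh hD hnear)
          (integral_Ioi_abs_mul_rpow_le hα hh hD hfar)
    _ = 2 * M / (α * (2 - α) * (α - 1)) * h ^ (2 - α) := by
        rw [hpow₁, hpow₂]
        field_simp
        ring

end PowerWeight

lemma abs_integral_le_of_abs_le_on_sphere {E : Type*} [NormedAddCommGroup E] [MeasurableSpace E]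
    {ν : Measure E} [IsProbabilityMeasure ν] (hν : ∀ᵐ θ ∂ν, ‖θ‖ = 1) {F : E → ℝ} {C : ℝ}
    (hF : ∀ θ, ‖θ‖ = 1 → |F θ| ≤ C) : |∫ θ, F θ ∂ν| ≤ C := by
  simpa using norm_integral_le_of_norm_le_const (f := F) (hν.mono fun θ => by simpa using hF θ)

section RayMean

variable {E : Type*} [NormedAddCommGroup E] [InnerProductSpace ℝ E] [CompleteSpace E]
  [MeasurableSpace E] [BorelSpace E]
  {ν : Measure E} [IsProbabilityMeasure ν] {f : E → ℝ}

def rayMean (ν : Measure E) (f : E → ℝ) (z : E) (r : ℝ) : ℝ :=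
  ∫ θ, rayRemainder f z θ r ∂ν

lemma Lop_eq_integral_rayMean {d : ℕ} (α dα : ℝ) (ν : Measure (Ed d)) (f : Ed d → ℝ) (z : Ed d) :
    Lop d α dα ν f z = dα * ∫ r in Ioi 0, rayMean ν f z r * r ^ (-1 - α) :=
  rfl

lemma stronglyMeasurable_rayMean [SecondCountableTopology E] (hf : Continuous f) (z : E) :
    StronglyMeasurable (rayMean ν f z) :=
  (continuous_rayRemainder_uncurry hf z).stronglyMeasurable.integral_prod_right'

variable (hν : ∀ᵐ θ ∂ν, ‖θ‖ = 1)
include hν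

lemma integrable_rayRemainder (hf : Differentiable ℝ f) {M₁ : ℝ} (hM₁ : ∀ x, ‖∇ f x‖ ≤ M₁)
    (z : E) (r : ℝ) : Integrable (fun θ => rayRemainder f z θ r) ν :=
  .mono' (integrable_const (2 * M₁ * |r|))
    ((continuous_rayRemainder_uncurry hf.continuous z).comp
      (Continuous.prodMk_right r)).aestronglyMeasurable
    (hν.mono fun _ hθ => abs_rayRemainder_le_linear hf hM₁ z hθ r)

lemma abs_rayMean_sub_le (hf : Differentiable ℝ f) {M₁ : ℝ} (hM₁ : ∀ x, ‖∇ f x‖ ≤ M₁)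
    (x y : E) {r C : ℝ}
    (hC : ∀ θ, ‖θ‖ = 1 → |rayRemainder f x θ r - rayRemainder f y θ r| ≤ C) :
    |rayMean ν f x r - rayMean ν f y r| ≤ C := by
  rw [rayMean, rayMean, ← integral_sub (integrable_rayRemainder hν hf hM₁ x r)
    (integrable_rayRemainder hν hf hM₁ y r)]
  exact abs_integral_le_of_abs_le_on_sphere hν hC

lemma integrableOn_rayMean_mul_rpow [SecondCountableTopology E] {α : ℝ} (hα : 1 < α ∧ α < 2)
    (hf : Differentiable ℝ f) {M₁ M₂ : ℝ} (hM₁ : ∀ x, ‖∇ f x‖ ≤ M₁)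
    (hlip : ∀ a b, ‖∇ f a - ∇ f b‖ ≤ M₂ * ‖a - b‖) (z : E) :
    IntegrableOn (fun r => rayMean ν f z r * r ^ (-1 - α)) (Ioi 0) :=
  integrableOn_Ioi_mul_rpow_of_abs_le hα
    (stronglyMeasurable_rayMean hf.continuous z).aestronglyMeasurable (A := M₂ / 2) (B := 2 * M₁)
    (fun r hr => (abs_integral_le_of_abs_le_on_sphere hν fun _ hθ =>
      abs_rayRemainder_le_sq hlip hf z hθ hr.le).trans_eq (by ring))
    (fun r hr => (abs_integral_le_of_abs_le_on_sphere hν fun _ hθ =>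
      abs_rayRemainder_le_linear hf hM₁ z hθ r).trans_eq (by rw [abs_of_pos hr]))

end RayMean

lemma Lop_sub_Lop_eq {d : ℕ} {α : ℝ} (dα : ℝ) {ν : Measure (Ed d)} {f : Ed d → ℝ} {x y : Ed d}
    (hx : IntegrableOn (fun r => rayMean ν f x r * r ^ (-1 - α)) (Ioi 0))
    (hy : IntegrableOn (fun r => rayMean ν f y r * r ^ (-1 - α)) (Ioi 0)) :
    Lop d α dα ν f x - Lop d α dα ν f y =
      dα * ∫ r in Ioi 0, (rayMean ν f x r - rayMean ν f y r) * r ^ (-1 - α) := by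
  rw [Lop_eq_integral_rayMean, Lop_eq_integral_rayMean, ← mul_sub, ← integral_sub hx hy]
  simp only [sub_mul]

lemma dCoef_pos {α : ℝ} (hα : 1 < α ∧ α < 2) : 0 < dCoef α := by
  obtain ⟨hα1, hα2⟩ := hα
  have hΓ : Real.Gamma (1 - α) < 0 := by
    have hΓ2 : 0 < Real.Gamma (1 - α + 1) := Real.Gamma_pos_of_pos (by linarith)
    rw [Real.Gamma_add_one (by linarith)] at hΓ2
    nlinarith
  have hcos : Real.cos (π * α / 2) < 0 :=
    Real.cos_neg_of_pi_div_two_lt_of_lt (by nlinarith [pi_pos]) (by nlinarith [pi_pos])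
  exact div_pos (by linarith) (mul_pos_of_neg_of_neg hΓ hcos)

theorem Lop_holder_estimate_general
    (d : ℕ) (α : ℝ) (hα : 1 < α ∧ α < 2)
    (ν : Measure (Ed d)) (hνprob : IsProbabilityMeasure ν)
    (hνsph : ν {θ : Ed d | ‖θ‖ ≠ 1} = 0)
    (f : Ed d → ℝ) (hf : ContDiff ℝ 2 f)
    (M₁ M₂ : ℝ) (hM₁ : ∀ x : Ed d, ‖gradient f x‖ ≤ M₁)
    (hM₂ : ∀ x : Ed d, ‖fderiv ℝ (gradient f) x‖ ≤ M₂) :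
    ∀ x y : Ed d,
      |Lop d α (dCoef α) ν f x - Lop d α (dCoef α) ν f y| ≤
        2 * dCoef α * M₂ / (α * (2 - α) * (α - 1)) * ‖x - y‖ ^ (2 - α) := by
  intro x y
  rcases eq_or_ne x y with rfl | hxy
  · simp [zero_rpow (sub_ne_zero.2 hα.2.ne')]
  have hν : ∀ᵐ θ ∂ν, ‖θ‖ = 1 := ae_iff.2 (by simpa using hνsph)
  have hf₁ : Differentiable ℝ f := hf.differentiable (by norm_num)
  have hlip := norm_gradient_sub_le_of_norm_fderiv_gradient_le hf hM₂
  have hint := integrableOn_rayMean_mul_rpow hν hα hf₁ hM₁ hlip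
  rw [Lop_sub_Lop_eq _ (hint x) (hint y), abs_mul, abs_of_pos (dCoef_pos hα),
    show 2 * dCoef α * M₂ / (α * (2 - α) * (α - 1)) * ‖x - y‖ ^ (2 - α) =
      dCoef α * (2 * M₂ / (α * (2 - α) * (α - 1)) * ‖x - y‖ ^ (2 - α)) by ring]
  refine mul_le_mul_of_nonneg_left ?_ (dCoef_pos hα).le
  have hint_sub : IntegrableOn
      (fun r => (rayMean ν f x r - rayMean ν f y r) * r ^ (-1 - α)) (Ioi 0) :=
    ((hint x).sub (hint y)).congr_fun (fun r _ => (sub_mul _ _ _).symm) measurableSet_Ioi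
  refine abs_integral_mul_rpow_le hα (norm_pos_iff.2 (sub_ne_zero.2 hxy)) hint_sub.abs
    (fun r hr => ?_) (fun r hr => ?_)
  · exact abs_rayMean_sub_le hν hf₁ hM₁ x y fun _ hθ =>
      abs_rayRemainder_sub_le_sq hlip hf₁ x y hθ hr.le
  · exact abs_rayMean_sub_le hν hf₁ hM₁ x y fun _ hθ =>
      abs_rayRemainder_sub_le_of_norm_sub_le hlip hf₁ x y hθ hr

/-- For `f ∈ C²(ℝ^d)` with bounded gradient and Hessian,
`|L^α f(x) - L^α f(y)| ≤ (2 d_α ‖∇²f‖_∞ / (α(2-α)(α-1))) |x-y|^{2-α}`. -/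
theorem Lop_holder_estimate
    (d : ℕ) (hd : 2 ≤ d) (α : ℝ) (hα : 1 < α ∧ α < 2)
    (ν : Measure (Ed d)) (hνprob : IsProbabilityMeasure ν)
    (hνsph : ν {θ : Ed d | ‖θ‖ ≠ 1} = 0)
    (f : Ed d → ℝ) (hf : ContDiff ℝ 2 f)
    (M₁ M₂ : ℝ) (hM₁ : ∀ x : Ed d, ‖gradient f x‖ ≤ M₁)
    (hM₂ : ∀ x : Ed d, ‖fderiv ℝ (gradient f) x‖ ≤ M₂) :
    ∀ x y : Ed d,
      |Lop d α (dCoef α) ν f x - Lop d α (dCoef α) ν f y| ≤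
        2 * dCoef α * M₂ / (α * (2 - α) * (α - 1)) * ‖x - y‖ ^ (2 - α) :=
  Lop_holder_estimate_general d α hα ν hνprob hνsph f hf M₁ M₂ hM₁ hM₂
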